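/- Let n ≥ 1 be an integer. In V = ℝ^{2n}, with standard basis vectors denoted ε_1,…,ε_n,δ_1,…,δ_n, let W = S_n × S_n act by permuting the ε-coordinates and the δ-coordinates separately, let ρ_0 := Σ_{i=1}^n ((n+1−2i)/2)ε_i + Σ_{j=1}^n ((n+1−2j)/2)δ_j, let Π := {ε_1−δ_1, δ_1−ε_2, ε_2−δ_2, …, δ_{n−1}−ε_n, ε_n−δ_n}, let Q^+ be the set of linear combinations of elements of Π with nonnegative integer coefficients, and let ξ := Σ_{i=1}^n ε_i − Σ_{j=1}^n δ_j. If λ ∈ V has trivial stabilizer in W and the whole orbit Wλ is contained in ρ_0 − Q^+, then there exist s ∈ ℤ_{≥0} and w ∈ W with λ = w(ρ_0 − sξ). -/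

import Mathlib

/-- The action of `(σ,τ) ∈ S_n × S_n` on `ℝ^{2n}` permuting the `ε`- and the
`δ`-coordinates separately (so that `ε_i ↦ ε_{σ(i)}`, `δ_j ↦ δ_{τ(j)}`). -/
def glAct (n : ℕ) (σ τ : Equiv.Perm (Fin n))
    (f : Fin n ⊕ Fin n → ℝ) : Fin n ⊕ Fin n → ℝ :=
  fun z => f (Sum.map (⇑σ.symm) (⇑τ.symm) z)

/-- `ρ₀ = Σ_i ((n+1−2i)/2)ε_i + Σ_j ((n+1−2j)/2)δ_j` for `gl(n|n)`
(`1`-indexed; here coordinates are `0`-indexed). -/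
noncomputable def glRho (n : ℕ) : Fin n ⊕ Fin n → ℝ :=
  Sum.elim (fun i => ((n : ℝ) - 1 - 2 * (i : ℕ)) / 2)
    (fun j => ((n : ℝ) - 1 - 2 * (j : ℕ)) / 2)

/-- `ξ = Σ ε_i − Σ δ_j`. -/
noncomputable def glXi (n : ℕ) : Fin n ⊕ Fin n → ℝ :=
  Sum.elim (fun _ => 1) (fun _ => -1)

/-- The simple roots `Π = {ε_1−δ_1, δ_1−ε_2, ε_2−δ_2, …, δ_{n−1}−ε_n,
ε_n−δ_n}` of `gl(n|n)` (written `0`-indexed). -/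
noncomputable def glSimple (n : ℕ) : Set (Fin n ⊕ Fin n → ℝ) :=
  {v | (∃ i : Fin n,
          v = Pi.single (Sum.inl i) 1 - Pi.single (Sum.inr i) 1) ∨
       (∃ i : Fin n, ∃ hi : (i : ℕ) + 1 < n,
          v = Pi.single (Sum.inr i) 1 - Pi.single (Sum.inl ⟨(i : ℕ) + 1, hi⟩) 1)}

/-
Regularity makes the `ε`-coordinates of `λ` pairwise distinct, and likewise its
`δ`-coordinates. Testing `ρ₀ - wλ ∈ Q⁺` on the first `ε`- and `δ`-coordinates, for `w` moving
a chosen coordinate there, shows that the gaps `x_i = (n-1)/2 - λ(ε_i)` and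
`y_j = (n-1)/2 - λ(δ_j)` are integers with `x_i ≥ 0` and `x_i + y_j ≥ 0`; since every element of
`Q⁺` has coordinate sum `0`, `Σ x + Σ y = n(n-1)`. But `n` distinct integers `≥ m` sum to at
least `nm + n(n-1)/2`. With `s`, `t` the minima of `x`, `y` this forces `s + t = 0` and `x`, `y`
to be permutations of `s, …, s+n-1` and `-s, …, -s+n-1`, i.e. `λ = w(ρ₀ - sξ)`.
-/

open Finset

theorem AddMonoidHom.apply_mem_of_mem_closure {M N : Type*} [AddZeroClass M] [AddZeroClass N]
    {s : Set M} {S : AddSubmonoid N} (f : M →+ N) (hf : ∀ v ∈ s, f v ∈ S) {q : M}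
    (hq : q ∈ AddSubmonoid.closure s) : f q ∈ S :=
  AddSubmonoid.closure_le (S := S.comap f) |>.2 hf hq

section SortedSum

variable {n : ℕ} {x : Fin n → ℤ} {t : ℤ}

theorem add_val_le_apply_of_strictMono (hx : StrictMono x) (ht : ∀ i, t ≤ x i) (k : Fin n) :
    t + k ≤ x k := by
  obtain ⟨k, hk⟩ := k
  induction k with
  | zero => simpa using ht _
  | succ k ih =>
    have := hx (show (⟨k, by omega⟩ : Fin n) < ⟨k + 1, hk⟩ from Nat.lt_succ_self k)
    push_cast at ih ⊢
    linarith [ih (by omega)]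

theorem add_val_le_apply_sort (hx : Function.Injective x) (ht : ∀ i, t ≤ x i) (k : Fin n) :
    t + k ≤ x (Tuple.sort x k) :=
  add_val_le_apply_of_strictMono
    ((Tuple.monotone_sort x).strictMono_of_injective (hx.comp (Equiv.injective _)))
    (fun _ => ht _) k

theorem sum_add_val_le_sum_of_injective (hx : Function.Injective x) (ht : ∀ i, t ≤ x i) :
    ∑ i : Fin n, (t + i) ≤ ∑ i, x i := by
  rw [← Equiv.sum_comp (Tuple.sort x) x]
  exact sum_le_sum fun k _ => add_val_le_apply_sort hx ht k

theorem exists_perm_eq_add_val_of_sum_eq (hx : Function.Injective x) (ht : ∀ i, t ≤ x i)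
    (hsum : ∑ i, x i = ∑ i : Fin n, (t + i)) :
    ∃ σ : Equiv.Perm (Fin n), ∀ i, x i = t + σ i := by
  rw [← Equiv.sum_comp (Tuple.sort x) x, eq_comm,
    sum_eq_sum_iff_of_le fun k _ => add_val_le_apply_sort hx ht k] at hsum
  refine ⟨(Tuple.sort x)⁻¹, fun i => ?_⟩
  simpa using (hsum ((Tuple.sort x)⁻¹ i) (mem_univ _)).symm

end SortedSum

theorem exists_perm_of_sum_eq_two_mul_sum_val {n : ℕ} (hn : 0 < n) {x y : Fin n → ℤ}
    (hx : Function.Injective x) (hy : Function.Injective y) (hx₀ : ∀ i, 0 ≤ x i)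
    (hxy : ∀ i j, 0 ≤ x i + y j) (hsum : ∑ i, x i + ∑ j, y j = 2 * ∑ i : Fin n, (i : ℤ)) :
    ∃ (s : ℕ) (σ τ : Equiv.Perm (Fin n)), (∀ i, x i = s + σ i) ∧ ∀ j, y j = τ j - s := by
  have hne : (univ : Finset (Fin n)).Nonempty := univ_nonempty_iff.2 ⟨⟨0, hn⟩⟩
  obtain ⟨i₀, -, hi₀⟩ := exists_min_image univ x hne
  obtain ⟨j₀, -, hj₀⟩ := exists_min_image univ y hne
  have hxmin : ∀ i, x i₀ ≤ x i := fun i => hi₀ i (mem_univ i)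
  have hymin : ∀ j, y j₀ ≤ y j := fun j => hj₀ j (mem_univ j)
  have hsum_add (t : ℤ) : ∑ i : Fin n, (t + i) = n * t + ∑ i : Fin n, (i : ℤ) := by
    simp [sum_add_distrib]
  have hX := sum_add_val_le_sum_of_injective hx hxmin
  have hY := sum_add_val_le_sum_of_injective hy hymin
  rw [hsum_add] at hX hY
  have hmin : 0 ≤ (n : ℤ) * (x i₀ + y j₀) := mul_nonneg (by positivity) (hxy i₀ j₀)
  obtain ⟨σ, hσ⟩ := exists_perm_eq_add_val_of_sum_eq hx hxmin (by rw [hsum_add]; linarith)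
  obtain ⟨τ, hτ⟩ := exists_perm_eq_add_val_of_sum_eq hy hymin (by rw [hsum_add]; linarith)
  have hmin_eq : x i₀ + y j₀ = 0 :=
    (mul_eq_zero.1 (by linarith : (n : ℤ) * (x i₀ + y j₀) = 0)).resolve_left (by positivity)
  lift x i₀ to ℕ using hx₀ i₀ with s
  exact ⟨s, σ, τ, hσ, fun j => by linarith [hτ j]⟩

section PositiveRootCone

variable {n : ℕ} {q : Fin n ⊕ Fin n → ℝ}

theorem exists_intCast_of_mem_closure_glSimple (hq : q ∈ AddSubmonoid.closure (glSimple n))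
    (z : Fin n ⊕ Fin n) : ∃ k : ℤ, q z = k := by
  refine (AddMonoidHom.apply_mem_of_mem_closure (S := AddMonoidHom.mrange (Int.castAddHom ℝ))
    (Pi.evalAddMonoidHom _ z) ?_ hq).imp fun k hk => hk.symm
  rintro v (⟨i, rfl⟩ | ⟨i, hi, rfl⟩) <;>
    simp only [Pi.evalAddMonoidHom_apply, Pi.sub_apply, Pi.single_apply] <;>
    split_ifs <;> norm_num <;>
    first | exact ⟨0, Int.cast_zero⟩ | exact ⟨1, Int.cast_one⟩ | exact ⟨-1, by simp⟩

theorem inl_zero_nonneg_of_mem_closure_glSimple (hn : 0 < n)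
    (hq : q ∈ AddSubmonoid.closure (glSimple n)) : 0 ≤ q (.inl ⟨0, hn⟩) := by
  refine AddMonoidHom.apply_mem_of_mem_closure (S := AddSubmonoid.nonneg ℝ)
    (Pi.evalAddMonoidHom _ _) ?_ hq
  rintro v (⟨i, rfl⟩ | ⟨i, hi, rfl⟩) <;> simp [Pi.single_apply, Fin.ext_iff, ite_nonneg]

theorem inl_zero_add_inr_zero_nonneg_of_mem_closure_glSimple (hn : 0 < n)
    (hq : q ∈ AddSubmonoid.closure (glSimple n)) :
    0 ≤ q (.inl ⟨0, hn⟩) + q (.inr ⟨0, hn⟩) := by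
  refine AddMonoidHom.apply_mem_of_mem_closure (S := AddSubmonoid.nonneg ℝ)
    (Pi.evalAddMonoidHom (fun _ => ℝ) (.inl ⟨0, hn⟩) + Pi.evalAddMonoidHom _ (.inr ⟨0, hn⟩))
    ?_ hq
  rintro v (⟨i, rfl⟩ | ⟨i, hi, rfl⟩) <;> simp [Pi.single_apply, Fin.ext_iff, ite_nonneg]

theorem sum_eq_zero_of_mem_closure_glSimple (hq : q ∈ AddSubmonoid.closure (glSimple n)) :
    ∑ z, q z = 0 := by
  have := AddMonoidHom.apply_mem_of_mem_closure (S := ⊥)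
    (∑ z, Pi.evalAddMonoidHom (fun _ => ℝ) z) ?_ hq
  · simpa using this
  rintro v (⟨i, rfl⟩ | ⟨i, hi, rfl⟩) <;> simp [Pi.single_apply]

end PositiveRootCone

section Action

variable {n : ℕ} (σ τ : Equiv.Perm (Fin n)) (f : Fin n ⊕ Fin n → ℝ)

@[simp] theorem glAct_inl (i : Fin n) : glAct n σ τ f (.inl i) = f (.inl (σ.symm i)) := rfl

@[simp] theorem glAct_inr (j : Fin n) : glAct n σ τ f (.inr j) = f (.inr (τ.symm j)) := rfl

theorem glAct_swap_one_eq_self {i j : Fin n} (h : f (.inl i) = f (.inl j)) :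
    glAct n (Equiv.swap i j) 1 f = f := by
  funext z
  rcases z with k | k
  · simp only [glAct_inl, Equiv.symm_swap, Equiv.swap_apply_def]
    split_ifs <;> simp_all
  · rfl

theorem glAct_one_swap_eq_self {i j : Fin n} (h : f (.inr i) = f (.inr j)) :
    glAct n 1 (Equiv.swap i j) f = f := by
  funext z
  rcases z with k | k
  · rfl
  · simp only [glAct_inr, Equiv.symm_swap, Equiv.swap_apply_def]
    split_ifs <;> simp_all

variable {f}

theorem injective_inl_of_regular
    (hreg : ∀ σ τ : Equiv.Perm (Fin n), glAct n σ τ f = f → σ = 1 ∧ τ = 1) :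
    Function.Injective fun i => f (.inl i) := fun _ _ h =>
  Equiv.swap_eq_one_iff.1 (hreg _ _ (glAct_swap_one_eq_self f h)).1

theorem injective_inr_of_regular
    (hreg : ∀ σ τ : Equiv.Perm (Fin n), glAct n σ τ f = f → σ = 1 ∧ τ = 1) :
    Function.Injective fun j => f (.inr j) := fun _ _ h =>
  Equiv.swap_eq_one_iff.1 (hreg _ _ (glAct_one_swap_eq_self f h)).2

end Action

section Orbit

def OrbitInRhoSubQPlus (n : ℕ) (lam : Fin n ⊕ Fin n → ℝ) : Prop :=
  ∀ σ τ : Equiv.Perm (Fin n), glRho n - glAct n σ τ lam ∈ AddSubmonoid.closure (glSimple n)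

variable {n : ℕ} {lam : Fin n ⊕ Fin n → ℝ}

theorem glRho_inl (i : Fin n) : glRho n (.inl i) = ((n : ℝ) - 1) / 2 - i := by
  simp only [glRho, Sum.elim_inl]; ring

theorem glRho_inr (j : Fin n) : glRho n (.inr j) = ((n : ℝ) - 1) / 2 - j := by
  simp only [glRho, Sum.elim_inr]; ring

/-- Measured from `(n - 1) / 2`, the largest coordinate of `ρ₀`. -/
noncomputable def glGap (n : ℕ) (lam : Fin n ⊕ Fin n → ℝ) (z : Fin n ⊕ Fin n) : ℝ :=
  ((n : ℝ) - 1) / 2 - lam z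

theorem glGap_inl_eq (hn : 0 < n) (i : Fin n) (τ : Equiv.Perm (Fin n)) :
    glGap n lam (.inl i) =
      (glRho n - glAct n (Equiv.swap ⟨0, hn⟩ i) τ lam) (.inl ⟨0, hn⟩) := by
  simp [glGap, glRho_inl]

theorem glGap_inr_eq (hn : 0 < n) (σ : Equiv.Perm (Fin n)) (j : Fin n) :
    glGap n lam (.inr j) =
      (glRho n - glAct n σ (Equiv.swap ⟨0, hn⟩ j) lam) (.inr ⟨0, hn⟩) := by
  simp [glGap, glRho_inr]

theorem exists_intCast_glGap (hn : 0 < n) (horb : OrbitInRhoSubQPlus n lam) :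
    ∀ z, ∃ k : ℤ, glGap n lam z = k
  | .inl i => glGap_inl_eq hn i 1 ▸ exists_intCast_of_mem_closure_glSimple (horb _ _) _
  | .inr j => glGap_inr_eq hn 1 j ▸ exists_intCast_of_mem_closure_glSimple (horb _ _) _

theorem glGap_inl_nonneg (hn : 0 < n) (horb : OrbitInRhoSubQPlus n lam) (i : Fin n) :
    0 ≤ glGap n lam (.inl i) :=
  glGap_inl_eq hn i 1 ▸ inl_zero_nonneg_of_mem_closure_glSimple hn (horb _ _)

theorem glGap_inl_add_glGap_inr_nonneg (hn : 0 < n) (horb : OrbitInRhoSubQPlus n lam)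
    (i j : Fin n) :
    0 ≤ glGap n lam (.inl i) + glGap n lam (.inr j) := by
  rw [glGap_inl_eq hn i (Equiv.swap ⟨0, hn⟩ j), glGap_inr_eq hn (Equiv.swap ⟨0, hn⟩ i) j]
  exact inl_zero_add_inr_zero_nonneg_of_mem_closure_glSimple hn (horb _ _)

theorem sum_glGap (horb : OrbitInRhoSubQPlus n lam) :
    ∑ z, glGap n lam z = 2 * ∑ i : Fin n, (i : ℝ) := by
  have hglAct : glAct n 1 1 lam = lam := by
    funext z
    rcases z with i | j <;> rfl
  calc ∑ z, glGap n lam z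
        = ∑ z, (glRho n - glAct n 1 1 lam) z + ∑ z, (((n : ℝ) - 1) / 2 - glRho n z) := by
        rw [← sum_add_distrib, hglAct]
        simp [glGap]
    _ = 2 * ∑ i : Fin n, (i : ℝ) := by
        rw [sum_eq_zero_of_mem_closure_glSimple (horb 1 1), zero_add, Fintype.sum_sum_type]
        simp [glRho_inl, glRho_inr, two_mul]

theorem eq_glAct_glRho_sub_smul_glXi {s : ℕ} {σ τ : Equiv.Perm (Fin n)}
    (hσ : ∀ i, glGap n lam (.inl i) = s + σ i) (hτ : ∀ j, glGap n lam (.inr j) = τ j - s) :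
    lam = glAct n σ.symm τ.symm (glRho n - (s : ℝ) • glXi n) := by
  funext z
  rcases z with i | j
  · have hi := hσ i
    simp only [glGap, glAct_inl, Equiv.symm_symm, Pi.sub_apply, Pi.smul_apply, glRho_inl,
      glXi, Sum.elim_inl, smul_eq_mul] at hi ⊢
    linarith
  · have hj := hτ j
    simp only [glGap, glAct_inr, Equiv.symm_symm, Pi.sub_apply, Pi.smul_apply, glRho_inr,
      glXi, Sum.elim_inr, smul_eq_mul] at hj ⊢
    linarith

end Orbit

/-- For `gl(n|n)`, the regular `W`-orbits lying entirely in `ρ₀ − Q⁺` are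
exactly the orbits `W(ρ₀ − sξ)` with `s ∈ ℤ_{≥0}`. -/
theorem glnn_regular_orbit (n : ℕ) (hn : 1 ≤ n)
    (lam : Fin n ⊕ Fin n → ℝ)
    (hstab : ∀ σ τ : Equiv.Perm (Fin n),
      glAct n σ τ lam = lam → σ = 1 ∧ τ = 1)
    (horb : ∀ σ τ : Equiv.Perm (Fin n),
      glRho n - glAct n σ τ lam ∈ AddSubmonoid.closure (glSimple n)) :
    ∃ (s : ℕ) (σ τ : Equiv.Perm (Fin n)),
      lam = glAct n σ τ (glRho n - (s : ℝ) • glXi n) := by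
  choose g hg using exists_intCast_glGap hn horb
  have hg_inj {f : Fin n → Fin n ⊕ Fin n} (hf : Function.Injective fun i => lam (f i)) :
      Function.Injective (g ∘ f) := fun i j h => hf <| by
    simpa [← hg, glGap] using congrArg ((↑) : ℤ → ℝ) h
  have hsum := sum_glGap horb
  simp only [hg, Fintype.sum_sum_type] at hsum
  obtain ⟨s, σ, τ, hσ, hτ⟩ := exists_perm_of_sum_eq_two_mul_sum_val hn (x := g ∘ .inl)
    (y := g ∘ .inr) (hg_inj (injective_inl_of_regular hstab))
    (hg_inj (injective_inr_of_regular hstab))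
    (fun i => by exact_mod_cast hg (.inl i) ▸ glGap_inl_nonneg hn horb i)
    (fun i j => by
      exact_mod_cast hg (.inl i) ▸ hg (.inr j) ▸ glGap_inl_add_glGap_inr_nonneg hn horb i j)
    (by simp only [Function.comp_apply]; exact_mod_cast hsum)
  exact ⟨s, σ.symm, τ.symm, eq_glAct_glRho_sub_smul_glXi
    (fun i => by rw [hg]; exact_mod_cast hσ i) (fun j => by rw [hg]; exact_mod_cast hτ j)⟩
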